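/- For each error ball B ∈ {B^D, B^I, B^DI}, there exist real constants c1, c2 and an even integer n0 such that for every even n ≥ n0, (3/2)·log2 n + c1 ≤ ρ_b(n,1;B) ≤ (3/2)·log2 n + c2. -/

import Mathlib

namespace BRC

/-- Hamming distance between two binary words (of the same length). -/
def hammingDist (x y : List Bool) : ℕ :=
  (List.zip x y).countP (fun p => p.1 != p.2)

/-- `balanced n` is the set `U_n` of binary words of length `n` with exactly `n/2` ones. -/
def balanced (n : ℕ) : Set (List Bool) :=
  {x | x.length = n ∧ x.count true = n / 2}

/-- `B^S(x)`: words obtained from `x` by at most one substitution. -/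
def BS (x : List Bool) : Set (List Bool) :=
  {y | y.length = x.length ∧ hammingDist x y ≤ 1}

/-- `B^D(x)`: words obtained from `x` by deleting one symbol. -/
def BD (x : List Bool) : Set (List Bool) :=
  {y | ∃ (u v : List Bool) (b : Bool), x = u ++ b :: v ∧ y = u ++ v}

/-- `B^I(x)`: words obtained from `x` by inserting one symbol. -/
def BI (x : List Bool) : Set (List Bool) :=
  {y | ∃ (u v : List Bool) (b : Bool), x = u ++ v ∧ y = u ++ b :: v}

def BDI (x : List Bool) : Set (List Bool) := BD x ∪ BI x
def BSD (x : List Bool) : Set (List Bool) := BS x ∪ BD x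
def BSI (x : List Bool) : Set (List Bool) := BS x ∪ BI x
def Bedit (x : List Bool) : Set (List Bool) := BS x ∪ BD x ∪ BI x

/-- `C` is a balanced `(n,N;B)`-reconstruction code: `C ⊆ U_n` and `ν(C;B) < N`. -/
def reconCode (n N : ℕ) (B : List Bool → Set (List Bool)) (C : Set (List Bool)) : Prop :=
  C ⊆ balanced n ∧ ∀ x ∈ C, ∀ y ∈ C, x ≠ y → (B x ∩ B y).ncard < N

/-- `ρ_b(n,N;B)`: optimal redundancy of a balanced `(n,N;B)`-reconstruction code. -/
noncomputable def rho (n N : ℕ) (B : List Bool → Set (List Bool)) : ℝ :=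
  sInf {r : ℝ | ∃ C : Set (List Bool),
    reconCode n N B C ∧ r = (n : ℝ) - Real.logb 2 (C.ncard : ℝ)}

/-- `(10)^m`. -/
def pat10 (m : ℕ) : List Bool := (List.replicate m [true, false]).flatten
/-- `(01)^m`. -/
def pat01 (m : ℕ) : List Bool := (List.replicate m [false, true]).flatten

/-- Type-A-confusable with parameter `m`: `{c, c'} = {(10)^m, (01)^m}`. -/
def TypeAWith (m : ℕ) (x y : List Bool) : Prop :=
  ∃ u v : List Bool,
    (x = u ++ pat10 m ++ v ∧ y = u ++ pat01 m ++ v) ∨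
    (x = u ++ pat01 m ++ v ∧ y = u ++ pat10 m ++ v)

/-- Type-A-confusable (with some `m ≥ 1`). -/
def TypeA (x y : List Bool) : Prop := ∃ m, 1 ≤ m ∧ TypeAWith m x y

/-- Type-B-confusable with parameter `m`:
`{c, c'} = {0 1^m, 1^m 0}` or `{c, c'} = {1 0^m, 0^m 1}`. -/
def TypeBWith (m : ℕ) (x y : List Bool) : Prop :=
  ∃ u v : List Bool,
    ((x = u ++ (false :: List.replicate m true) ++ v ∧
        y = u ++ (List.replicate m true ++ [false]) ++ v) ∨
     (x = u ++ (List.replicate m true ++ [false]) ++ v ∧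
        y = u ++ (false :: List.replicate m true) ++ v)) ∨
    ((x = u ++ (true :: List.replicate m false) ++ v ∧
        y = u ++ (List.replicate m false ++ [true]) ++ v) ∨
     (x = u ++ (List.replicate m false ++ [true]) ++ v ∧
        y = u ++ (true :: List.replicate m false) ++ v))

/-- Type-B-confusable (with some `m ≥ 2`). -/
def TypeB (x y : List Bool) : Prop := ∃ m, 2 ≤ m ∧ TypeBWith m x y

/-- Number of runs of a binary word. -/
def numRuns (x : List Bool) : ℕ := (x.destutter (· ≠ ·)).length

/-- `V_{n-1}`: binary words of length `n-1` with Hamming weight `n/2` or `n/2 - 1`. -/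
def Vset (n : ℕ) : Set (List Bool) :=
  {x | x.length = n - 1 ∧ (x.count true = n / 2 ∨ x.count true = n / 2 - 1)}

/-- VT weighted sum `Σ_{i=1}^n i·x_i` (positions indexed from 1). -/
def vtSum (x : List Bool) : ℕ :=
  ((x.zipIdx.map Prod.swap).map (fun p => if p.2 then p.1 + 1 else 0)).sum

/-- The balanced Varshamov–Tenengolts code `BVT_a(n)`. -/
def BVT (n a : ℕ) : Set (List Bool) :=
  {x | x ∈ balanced n ∧ vtSum x ≡ a [MOD n + 1]}

/-- `R_2^b(n,1,m)`: balanced words of length `n` all of whose runs have length at most `m`. -/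
def R1 (n m : ℕ) : Set (List Bool) :=
  {x | x ∈ balanced n ∧ ∀ b : Bool, ¬ (List.replicate (m + 1) b <:+: x)}

/-!
For all three balls a code has `ν(C; B) < 1` exactly when it corrects one deletion: two distinct
words of equal length share an insertion iff they share a deletion, and a deletion never equals an
insertion. So `ρ_b(n, 1; B)` is the redundancy of the best balanced single-deletion code.

Upper bound: the balanced VT codes `BVT_a(n)` correct one deletion, and by pigeonhole one of them
has at least `C(n, n/2) / (n + 1) ≥ 2^n / ((n + 1) √(2n))` words.

Lower bound: a word with `d` descents has `d` distinct deletions, all of length `n - 1` and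
weight `n/2` or `n/2 - 1`; there are only `C(n, n/2) ≤ 2^n / √n` such words. Codewords with at
least `n/8` descents therefore number at most `16 C(n, n/2) / n`, while all words with fewer than
`n/8` descents number at most `2^n / n^2`, so a code has at most `17 · 2^n / n^{3/2}` words.
-/

open Finset Real

def fixedWeight : ℕ → ℕ → Finset (List Bool)
  | 0, 0 => {[]}
  | 0, _ + 1 => ∅
  | m + 1, 0 => (fixedWeight m 0).image (false :: ·)
  | m + 1, k + 1 =>
      (fixedWeight m (k + 1)).image (false :: ·) ∪ (fixedWeight m k).image (true :: ·)

theorem mem_fixedWeight {m k : ℕ} {x : List Bool} :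
    x ∈ fixedWeight m k ↔ x.length = m ∧ x.count true = k := by
  induction m generalizing k x with
  | zero => cases k <;> cases x <;> simp [fixedWeight]
  | succ m ih =>
    cases k <;> rcases x with _ | ⟨_ | _, t⟩ <;> simp [fixedWeight, ih]

theorem card_fixedWeight (m k : ℕ) : (fixedWeight m k).card = m.choose k := by
  induction m generalizing k with
  | zero => cases k <;> simp [fixedWeight]
  | succ m ih =>
    cases k with
    | zero => simp [fixedWeight, card_image_of_injective _ List.cons_injective, ih]
    | succ k =>
      rw [fixedWeight, card_union_of_disjoint, card_image_of_injective _ List.cons_injective,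
        card_image_of_injective _ List.cons_injective, ih, ih, Nat.choose_succ_succ', add_comm]
      simp [disjoint_left]

theorem balanced_eq_fixedWeight (n : ℕ) : balanced n = fixedWeight n (n / 2) := by
  ext x; simp [balanced, mem_fixedWeight]

theorem balanced_finite (n : ℕ) : (balanced n).Finite := by
  rw [balanced_eq_fixedWeight]; exact finite_toSet _

theorem exists_eq_append_of_append_eq_append {α : Type*} {u₁ v₁ u₂ v₂ : List α}
    (h : u₁ ++ v₁ = u₂ ++ v₂) (hle : u₁.length ≤ u₂.length) :
    ∃ t, u₂ = u₁ ++ t ∧ v₁ = t ++ v₂ := by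
  rcases List.append_eq_append_iff.1 h with h' | ⟨t, rfl, rfl⟩
  · exact h'
  · rw [List.length_append] at hle
    obtain rfl : t = [] := List.eq_nil_of_length_eq_zero (by omega)
    exact ⟨[], by simp, by simp⟩

theorem length_of_mem_BD {x z : List Bool} (h : z ∈ BD x) : z.length + 1 = x.length := by
  obtain ⟨u, v, b, rfl, rfl⟩ := h; simp; omega

theorem length_of_mem_BI {x z : List Bool} (h : z ∈ BI x) : z.length = x.length + 1 := by
  obtain ⟨u, v, b, rfl, rfl⟩ := h; simp; omega

theorem count_of_mem_BD {x z : List Bool} (h : z ∈ BD x) :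
    z.count true = x.count true ∨ z.count true + 1 = x.count true := by
  obtain ⟨u, v, b, rfl, rfl⟩ := h
  cases b <;> simp [Nat.add_assoc]

theorem BD_finite (x : List Bool) : (BD x).Finite :=
  (List.finite_length_eq Bool (x.length - 1)).subset fun z hz =>
    show z.length = x.length - 1 by have := length_of_mem_BD hz; omega

theorem BI_finite (x : List Bool) : (BI x).Finite :=
  (List.finite_length_eq Bool (x.length + 1)).subset fun _ hz => length_of_mem_BI hz

theorem eraseIdx_mem_BD {x : List Bool} {i : ℕ} (h : i < x.length) : x.eraseIdx i ∈ BD x :=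
  ⟨x.take i, x.drop (i + 1), x[i], by simp, List.eraseIdx_eq_take_drop_succ x i⟩

theorem exists_of_mem_BD_inter {x y z : List Bool} (hx : z ∈ BD x) (hy : z ∈ BD y) :
    ∃ u t v : List Bool, ∃ b c : Bool,
      (x = u ++ b :: (t ++ v) ∧ y = u ++ t ++ c :: v) ∨
      (y = u ++ b :: (t ++ v) ∧ x = u ++ t ++ c :: v) := by
  obtain ⟨u₁, v₁, b₁, rfl, rfl⟩ := hx
  obtain ⟨u₂, v₂, b₂, rfl, hz⟩ := hy
  rcases le_total u₁.length u₂.length with hle | hle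
  · obtain ⟨t, rfl, rfl⟩ := exists_eq_append_of_append_eq_append hz hle
    exact ⟨u₁, t, v₂, b₁, b₂, Or.inl ⟨rfl, rfl⟩⟩
  · obtain ⟨t, rfl, rfl⟩ := exists_eq_append_of_append_eq_append hz.symm hle
    exact ⟨u₂, t, v₁, b₂, b₁, Or.inr ⟨rfl, rfl⟩⟩

theorem disjoint_BD_of_disjoint_BI {x y : List Bool} (h : Disjoint (BI x) (BI y)) :
    Disjoint (BD x) (BD y) := by
  refine Set.disjoint_left.2 fun z hx hy => ?_
  obtain ⟨u, t, v, b, c, ⟨rfl, rfl⟩ | ⟨rfl, rfl⟩⟩ := exists_of_mem_BD_inter hx hy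
  · exact h.ne_of_mem (⟨u ++ b :: t, v, c, by simp, rfl⟩ : u ++ b :: t ++ c :: v ∈ BI _)
      ⟨u, t ++ c :: v, b, by simp, by simp⟩ rfl
  · exact h.ne_of_mem (⟨u, t ++ c :: v, b, by simp, by simp⟩ : u ++ b :: t ++ c :: v ∈ BI _)
      ⟨u ++ b :: t, v, c, by simp, rfl⟩ rfl

theorem disjoint_BI_of_disjoint_BD {x y : List Bool} (hxy : x ≠ y)
    (h : Disjoint (BD x) (BD y)) : Disjoint (BI x) (BI y) := by
  refine Set.disjoint_left.2 fun w hx hy => ?_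
  obtain ⟨u₁, v₁, b₁, rfl, rfl⟩ := hx
  obtain ⟨u₂, v₂, b₂, rfl, hw⟩ := hy
  wlog hle : u₁.length ≤ u₂.length generalizing u₁ v₁ b₁ u₂ v₂ b₂
  · exact this _ _ _ _ _ _ hw.symm (Ne.symm hxy) h.symm (by omega)
  obtain ⟨_ | ⟨c, t⟩, rfl, hv⟩ := exists_eq_append_of_append_eq_append hw hle
  · simp only [List.nil_append, List.cons.injEq] at hv
    exact hxy (by simp [hv.2])
  · simp only [List.cons_append, List.cons.injEq] at hv
    obtain ⟨rfl, rfl⟩ := hv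
    exact h.ne_of_mem (⟨u₁ ++ t, v₂, b₂, by simp, rfl⟩ : u₁ ++ t ++ v₂ ∈ BD _)
      ⟨u₁, t ++ v₂, b₁, by simp, by simp⟩ rfl

theorem disjoint_BD_BI {x y : List Bool} (h : x.length = y.length) : Disjoint (BD x) (BI y) :=
  Set.disjoint_left.2 fun _ hx hy => by
    have := length_of_mem_BD hx; have := length_of_mem_BI hy; omega

theorem ncard_inter_lt_one_iff {B : List Bool → Set (List Bool)}
    (hB : B ∈ ({BD, BI, BDI} : Set (List Bool → Set (List Bool)))) {x y : List Bool}
    (hxy : x ≠ y) (hlen : x.length = y.length) :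
    (B x ∩ B y).ncard < 1 ↔ Disjoint (BD x) (BD y) := by
  have hfin : (B x).Finite := by
    rcases hB with rfl | rfl | rfl
    exacts [BD_finite x, BI_finite x, (BD_finite x).union (BI_finite x)]
  rw [Nat.lt_one_iff, Set.ncard_eq_zero (hfin.inter_of_left _), ← Set.disjoint_iff_inter_eq_empty]
  rcases hB with rfl | rfl | rfl
  · rfl
  · exact ⟨disjoint_BD_of_disjoint_BI, disjoint_BI_of_disjoint_BD hxy⟩
  · simp only [BDI, Set.disjoint_union_left, Set.disjoint_union_right]
    exact ⟨fun h => h.1.1, fun h => ⟨⟨h, (disjoint_BD_BI hlen.symm).symm⟩,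
      disjoint_BD_BI hlen, disjoint_BI_of_disjoint_BD hxy h⟩⟩

theorem reconCode_one_iff {n : ℕ} {B : List Bool → Set (List Bool)}
    (hB : B ∈ ({BD, BI, BDI} : Set (List Bool → Set (List Bool)))) (C : Set (List Bool)) :
    reconCode n 1 B C ↔ C ⊆ balanced n ∧ C.PairwiseDisjoint BD := by
  refine and_congr_right fun hC => forall₂_congr fun x hx => forall₂_congr fun y hy => ?_
  exact imp_congr_right fun hxy =>
    ncard_inter_lt_one_iff hB hxy ((hC hx).1.trans (hC hy).1.symm)

theorem vtSum_zipIdx (l : List Bool) (s : ℕ) :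
    (((l.zipIdx s).map Prod.swap).map fun p => if p.2 then p.1 + 1 else 0).sum
      = vtSum l + s * l.count true := by
  induction l generalizing s with
  | nil => simp [vtSum]
  | cons b t ih =>
    simp only [vtSum, List.zipIdx_cons, List.map_cons, Prod.swap_prod_mk, List.sum_cons] at ih ⊢
    rw [ih (s + 1), ih 1]
    cases b <;> simp <;> ring

theorem vtSum_cons (b : Bool) (t : List Bool) :
    vtSum (b :: t) = b.toNat + vtSum t + t.count true := by
  simp only [vtSum, List.zipIdx_cons, List.map_cons, Prod.swap_prod_mk, List.sum_cons,
    vtSum_zipIdx t 1]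
  cases b
  · simp
  · simp; ring

theorem vtSum_append (u v : List Bool) :
    vtSum (u ++ v) = vtSum u + vtSum v + u.length * v.count true := by
  induction u with
  | nil => simp [vtSum]
  | cons b t ih =>
    simp only [List.cons_append, vtSum_cons, ih, List.count_append, List.length_cons]
    ring

theorem vtSum_move (u t v : List Bool) (b : Bool) :
    vtSum (u ++ b :: (t ++ v)) + t.length * b.toNat = vtSum (u ++ t ++ b :: v) + t.count true := by
  simp only [vtSum_append, vtSum_cons, List.count_append, List.count_cons, List.length_append]
  cases b <;> simp <;> ring

theorem eq_replicate_of_length_mul_toNat_eq_count {t : List Bool} {b : Bool}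
    (h : t.length * b.toNat = t.count true) : t = List.replicate t.length b := by
  refine List.eq_replicate_iff.2 ⟨rfl, fun c hc => ?_⟩
  cases b
  · have : true ∉ t := List.count_eq_zero.1 (by simpa using h.symm)
    cases c <;> simp_all
  · exact (List.count_eq_length.1 (by simpa using h.symm) c hc).symm

/-- Levenshtein's argument: the move changes the VT sum by `|t|·b - #ones(t)`, which lies strictly
between `-(n+1)` and `n+1`, so it vanishes mod `n + 1` only if `t` is constant equal to `b`. -/
theorem eq_of_move_mem_BVT {n a : ℕ} {u t v : List Bool} {b c : Bool}
    (hx : u ++ b :: (t ++ v) ∈ BVT n a) (hy : u ++ t ++ c :: v ∈ BVT n a) :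
    u ++ b :: (t ++ v) = u ++ t ++ c :: v := by
  obtain ⟨⟨hlen, hcx⟩, hvx⟩ := hx
  obtain ⟨⟨-, hcy⟩, hvy⟩ := hy
  obtain rfl : b = c := by
    have := hcx.trans hcy.symm
    simp only [List.count_append, List.count_cons] at this
    cases b <;> cases c <;> simp at this ⊢ <;> omega
  have hmod : t.length * b.toNat ≡ t.count true [MOD n + 1] :=
    Nat.ModEq.add_left_cancel (hvx.trans hvy.symm) (by rw [vtSum_move])
  have hcount := List.count_le_length (a := true) (l := t)
  have hlt : t.length < n + 1 := by simp at hlen; omega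
  have ht := eq_replicate_of_length_mul_toNat_eq_count
    (hmod.eq_of_lt_of_lt (by cases b <;> simp [hlt]) (by omega))
  rw [ht, ← List.cons_append, ← List.replicate_succ, List.replicate_succ']
  simp

theorem BVT_pairwiseDisjoint_BD (n a : ℕ) : (BVT n a).PairwiseDisjoint BD := by
  intro x hx y hy hxy
  refine Set.disjoint_left.2 fun z hzx hzy => hxy ?_
  obtain ⟨u, t, v, b, c, ⟨rfl, rfl⟩ | ⟨rfl, rfl⟩⟩ := exists_of_mem_BD_inter hzx hzy
  exacts [eq_of_move_mem_BVT hx hy, (eq_of_move_mem_BVT hy hx).symm]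

def descentSet (x : List Bool) : Finset ℕ :=
  (range (x.length - 1)).filter fun i => x[i]? ≠ x[i + 1]?

theorem mem_descentSet {x : List Bool} {i : ℕ} :
    i ∈ descentSet x ↔ i + 1 < x.length ∧ x[i]? ≠ x[i + 1]? := by
  simp only [descentSet, mem_filter, mem_range]
  exact and_congr_left fun _ => by omega

theorem eraseIdx_injOn_descentSet (x : List Bool) :
    Set.InjOn x.eraseIdx (descentSet x) := by
  suffices h : ∀ i ∈ descentSet x, ∀ j, i < j → x.eraseIdx i ≠ x.eraseIdx j by
    intro i hi j hj hij
    by_contra hne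
    rcases lt_or_gt_of_ne hne with hlt | hlt
    exacts [h i hi j hlt hij, h j hj i hlt hij.symm]
  intro i hi j hij heq
  have := congrArg (·[i]?) heq
  simp only [List.getElem?_eraseIdx_of_ge le_rfl, List.getElem?_eraseIdx_of_lt hij] at this
  exact (mem_descentSet.1 hi).2 this.symm

theorem eq_of_descentSet_eq {x y : List Bool} (hlen : x.length = y.length)
    (hhead : x.headI = y.headI) (hd : descentSet x = descentSet y) : x = y := by
  refine List.ext_getElem? fun i => ?_
  induction i with
  | zero => cases x <;> cases y <;> simp_all
  | succ i ih =>
    by_cases hi : i + 1 < x.length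
    · have hi' : i + 1 < y.length := hlen ▸ hi
      have := congrArg (i ∈ ·) hd
      simp only [mem_descentSet, hi, hi', true_and, eq_iff_iff, ih] at this
      rw [List.getElem?_eq_getElem hi, List.getElem?_eq_getElem hi'] at this ⊢
      rw [List.getElem?_eq_getElem (by omega : i < y.length)] at this
      simp only [ne_eq, Option.some.injEq] at this ⊢
      exact (by decide : ∀ a b c : Bool, (¬a = b ↔ ¬a = c) → b = c) _ _ _ this
    · rw [List.getElem?_eq_none (by omega), List.getElem?_eq_none (by omega)]

theorem card_filter_card_descentSet_eq_le {n : ℕ} (S : Finset (List Bool))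
    (hS : ∀ x ∈ S, x.length = n) (j : ℕ) :
    #{x ∈ S | #(descentSet x) = j} ≤ 2 * (n - 1).choose j := by
  calc #{x ∈ S | #(descentSet x) = j}
      ≤ #((univ : Finset Bool) ×ˢ (range (n - 1)).powersetCard j) := by
        refine card_le_card_of_injOn (fun x => (x.headI, descentSet x)) (fun x hx => ?_)
          fun x hx y hy hxy => ?_
        · obtain ⟨hxS, hxj⟩ := mem_filter.1 (mem_coe.1 hx)
          refine mem_coe.2 (mem_product.2
            ⟨mem_univ _, mem_powersetCard.2 ⟨fun i hi => ?_, hxj⟩⟩)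
          have := (mem_descentSet.1 hi).1
          rw [hS x hxS] at this
          exact mem_range.2 (by omega)
        · have hxS := (mem_filter.1 (mem_coe.1 hx)).1
          have hyS := (mem_filter.1 (mem_coe.1 hy)).1
          simp only [Prod.mk.injEq] at hxy
          exact eq_of_descentSet_eq ((hS x hxS).trans (hS y hyS).symm) hxy.1 hxy.2
    _ = 2 * (n - 1).choose j := by simp

theorem sum_card_descentSet_le {n : ℕ} (hn : 2 ≤ n) {F : Finset (List Bool)}
    (hF : ∀ x ∈ F, x ∈ balanced n) (hdisj : (F : Set (List Bool)).PairwiseDisjoint BD) :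
    ∑ x ∈ F, #(descentSet x) ≤ n.choose (n / 2) := by
  set E : List Bool → Finset (List Bool) := fun x => (descentSet x).image x.eraseIdx
  have hE : ∀ x, ∀ z ∈ E x, z ∈ BD x := by
    intro x z hz
    obtain ⟨i, hi, rfl⟩ := mem_image.1 hz
    exact eraseIdx_mem_BD (by have := (mem_descentSet.1 hi).1; omega)
  have hEdisj : (F : Set (List Bool)).PairwiseDisjoint E := fun x hx y hy hxy =>
    disjoint_left.2 fun z hzx hzy => Set.disjoint_left.1 (hdisj hx hy hxy) (hE x z hzx) (hE y z hzy)
  have hsub : F.biUnion E ⊆ fixedWeight (n - 1) (n / 2) ∪ fixedWeight (n - 1) (n / 2 - 1) := by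
    intro z hz
    obtain ⟨x, hx, hzx⟩ := mem_biUnion.1 hz
    obtain ⟨hlen, hcount⟩ := hF x hx
    have := length_of_mem_BD (hE x z hzx)
    rcases count_of_mem_BD (hE x z hzx) with h | h <;> simp [mem_fixedWeight] <;> omega
  have hpascal := Nat.choose_succ_succ' (n - 1) (n / 2 - 1)
  rw [Nat.sub_add_cancel (by omega), Nat.sub_add_cancel (by omega)] at hpascal
  calc ∑ x ∈ F, #(descentSet x) = ∑ x ∈ F, #(E x) :=
        sum_congr rfl fun x _ => (card_image_of_injOn (eraseIdx_injOn_descentSet x)).symm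
    _ = #(F.biUnion E) := (card_biUnion hEdisj).symm
    _ ≤ #(fixedWeight (n - 1) (n / 2)) + #(fixedWeight (n - 1) (n / 2 - 1)) :=
        (card_le_card hsub).trans (card_union_le _ _)
    _ = n.choose (n / 2) := by rw [card_fixedWeight, card_fixedWeight, hpascal, add_comm]

theorem choose_mul_two_pow_le {m j d : ℕ} (h : 3 * (j + d) ≤ m) :
    m.choose j * 2 ^ d ≤ m.choose (j + d) := by
  induction d with
  | zero => simp
  | succ d ih =>
    have hstep : 2 * m.choose (j + d) ≤ m.choose (j + d + 1) := by
      have := Nat.choose_succ_right_eq m (j + d)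
      have : m.choose (j + d) * (2 * (j + d + 1)) ≤ m.choose (j + d) * (m - (j + d)) :=
        Nat.mul_le_mul_left _ (by omega)
      nlinarith
    calc m.choose j * 2 ^ (d + 1) = m.choose j * 2 ^ d * 2 := by ring
      _ ≤ m.choose (j + d) * 2 := Nat.mul_le_mul_right _ (ih (by omega))
      _ ≤ m.choose (j + (d + 1)) := by rw [← add_assoc]; omega

theorem sum_range_choose_mul_two_pow_le {m k t : ℕ} (hk : k ≤ t) (ht : 3 * t ≤ m) :
    (∑ j ∈ range k, m.choose j) * 2 ^ (t - k) ≤ k * 2 ^ m := by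
  rw [sum_mul]
  calc ∑ j ∈ range k, m.choose j * 2 ^ (t - k) ≤ ∑ _j ∈ range k, 2 ^ m := by
        refine sum_le_sum fun j hj => ?_
        have hj := mem_range.1 hj
        calc m.choose j * 2 ^ (t - k) ≤ m.choose j * 2 ^ (t - j) :=
              Nat.mul_le_mul_left _ (Nat.pow_le_pow_right two_pos (by omega))
          _ ≤ m.choose (j + (t - j)) := choose_mul_two_pow_le (by omega)
          _ ≤ 2 ^ m := Nat.choose_le_two_pow _ _
    _ = k * 2 ^ m := by simp

theorem cube_le_two_pow_div_five {n : ℕ} (hn : 135 ≤ n) : n ^ 3 ≤ 2 ^ (n / 5) := by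
  have key : ∀ q, 9 ≤ q → 15 * (q + 1) ≤ 2 ^ q := by
    intro q hq
    induction q, hq using Nat.le_induction with
    | base => norm_num
    | succ q _ ih => rw [pow_succ]; omega
  have := key (n / 15) (by omega)
  calc n ^ 3 ≤ (2 ^ (n / 15)) ^ 3 := Nat.pow_le_pow_left (by omega) 3
    _ = 2 ^ (3 * (n / 15)) := by rw [← pow_mul, mul_comm]
    _ ≤ 2 ^ (n / 5) := Nat.pow_le_pow_right two_pos (by omega)

theorem centralBinom_sq_mul_le (k : ℕ) : (2 * k + 1) * k.centralBinom ^ 2 ≤ 16 ^ k := by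
  induction k with
  | zero => simp
  | succ k ih =>
    have hrec := Nat.succ_mul_centralBinom_succ k
    refine Nat.le_of_mul_le_mul_left (c := (k + 1) ^ 2) ?_ (by positivity)
    calc (k + 1) ^ 2 * ((2 * (k + 1) + 1) * (k + 1).centralBinom ^ 2)
        = 4 * (2 * k + 3) * (2 * k + 1) * ((2 * k + 1) * k.centralBinom ^ 2) := by
          rw [show (k + 1) ^ 2 * ((2 * (k + 1) + 1) * (k + 1).centralBinom ^ 2)
            = (2 * k + 3) * ((k + 1) * (k + 1).centralBinom) ^ 2 by ring, hrec]
          ring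
      _ ≤ 16 * (k + 1) ^ 2 * 16 ^ k := Nat.mul_le_mul (by nlinarith) ih
      _ = (k + 1) ^ 2 * 16 ^ (k + 1) := by ring

theorem sixteen_pow_le_centralBinom_sq_mul {k : ℕ} (hk : 1 ≤ k) :
    16 ^ k ≤ 4 * k * k.centralBinom ^ 2 := by
  induction k, hk using Nat.le_induction with
  | base => simp [Nat.centralBinom, Nat.choose]
  | succ k hk ih =>
    have hrec := Nat.succ_mul_centralBinom_succ k
    refine Nat.le_of_mul_le_mul_left (c := (k + 1) ^ 2) ?_ (by positivity)
    calc (k + 1) ^ 2 * 16 ^ (k + 1) = 16 * (k + 1) ^ 2 * 16 ^ k := by ring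
      _ ≤ 16 * (k + 1) ^ 2 * (4 * k * k.centralBinom ^ 2) := Nat.mul_le_mul_left _ ih
      _ = 16 * (k + 1) * (4 * k * (k + 1)) * k.centralBinom ^ 2 := by ring
      _ ≤ 16 * (k + 1) * (2 * k + 1) ^ 2 * k.centralBinom ^ 2 :=
          Nat.mul_le_mul_right _ (Nat.mul_le_mul_left _ (by nlinarith))
      _ = (k + 1) ^ 2 * (4 * (k + 1) * (k + 1).centralBinom ^ 2) := by
          rw [show (k + 1) ^ 2 * (4 * (k + 1) * (k + 1).centralBinom ^ 2)
            = 4 * (k + 1) * ((k + 1) * (k + 1).centralBinom) ^ 2 by ring, hrec]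
          ring

theorem two_pow_sq_eq (k : ℕ) : ((2 : ℝ) ^ (2 * k)) ^ 2 = 16 ^ k := by
  rw [← pow_mul, show 2 * k * 2 = 4 * k by ring, pow_mul]; norm_num

theorem choose_half_mul_sqrt_le {n : ℕ} (hn : Even n) :
    (n.choose (n / 2) : ℝ) * √n ≤ 2 ^ n := by
  obtain ⟨k, rfl⟩ := hn.two_dvd
  rw [Nat.mul_div_cancel_left k two_pos, ← Nat.centralBinom_eq_two_mul_choose]
  have h : ((2 * k + 1) * k.centralBinom ^ 2 : ℝ) ≤ 16 ^ k := by
    exact_mod_cast centralBinom_sq_mul_le k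
  refine (pow_le_pow_iff_left₀ (by positivity) (by positivity) two_ne_zero).1 ?_
  rw [mul_pow, Real.sq_sqrt (by positivity), two_pow_sq_eq]
  push_cast
  nlinarith [sq_nonneg (k.centralBinom : ℝ)]

theorem two_pow_le_sqrt_mul_choose_half {n : ℕ} (hn : Even n) (h2 : 2 ≤ n) :
    (2 : ℝ) ^ n ≤ √(2 * n) * n.choose (n / 2) := by
  obtain ⟨k, rfl⟩ := hn.two_dvd
  rw [Nat.mul_div_cancel_left k two_pos, ← Nat.centralBinom_eq_two_mul_choose]
  have h : (16 ^ k : ℝ) ≤ 4 * k * k.centralBinom ^ 2 := by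
    exact_mod_cast sixteen_pow_le_centralBinom_sq_mul (by omega)
  refine (pow_le_pow_iff_left₀ (by positivity) (by positivity) two_ne_zero).1 ?_
  rw [mul_pow, Real.sq_sqrt (by positivity), two_pow_sq_eq]
  push_cast
  linarith

theorem card_few_descents_mul_sq_le {n : ℕ} (hn : 1000 ≤ n) (S : Finset (List Bool))
    (hS : ∀ x ∈ S, x.length = n) :
    #{x ∈ S | #(descentSet x) < n / 8} * n ^ 2 ≤ 2 ^ n := by
  set k := n / 8 with hk
  set t := (n - 1) / 3 with ht
  have hcount : #{x ∈ S | #(descentSet x) < k} ≤ ∑ j ∈ range k, 2 * (n - 1).choose j := by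
    rw [card_eq_sum_card_fiberwise (f := fun x => #(descentSet x)) (t := range k)
      fun x hx => mem_range.2 (mem_filter.1 hx).2]
    refine sum_le_sum fun j _ => le_trans (card_le_card ?_)
      (card_filter_card_descentSet_eq_le S hS j)
    exact filter_subset_filter _ (filter_subset _ _)
  have hsum := sum_range_choose_mul_two_pow_le (m := n - 1) (k := k) (t := t) (by omega) (by omega)
  rw [← mul_sum] at hcount
  have hpow : n ^ 3 ≤ 2 ^ (t - k) :=
    (cube_le_two_pow_div_five (by omega)).trans (Nat.pow_le_pow_right two_pos (by omega))
  refine Nat.le_of_mul_le_mul_right (c := n) ?_ (by omega)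
  calc #{x ∈ S | #(descentSet x) < k} * n ^ 2 * n
      = #{x ∈ S | #(descentSet x) < k} * n ^ 3 := by ring
    _ ≤ 2 * (∑ j ∈ range k, (n - 1).choose j) * 2 ^ (t - k) := Nat.mul_le_mul hcount hpow
    _ ≤ 2 * (k * 2 ^ (n - 1)) := by rw [mul_assoc]; exact Nat.mul_le_mul_left 2 hsum
    _ ≤ 2 ^ n * n := by
        rw [show 2 * (k * 2 ^ (n - 1)) = k * 2 ^ (n - 1 + 1) by ring,
          Nat.sub_add_cancel (by omega), mul_comm]
        exact Nat.mul_le_mul_left _ (by omega)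

theorem card_many_descents_mul_le {n : ℕ} (hn : 2 ≤ n) {F : Finset (List Bool)}
    (hF : ∀ x ∈ F, x ∈ balanced n) (hdisj : (F : Set (List Bool)).PairwiseDisjoint BD) :
    #{x ∈ F | ¬#(descentSet x) < n / 8} * (n / 8) ≤ n.choose (n / 2) :=
  calc #{x ∈ F | ¬#(descentSet x) < n / 8} * (n / 8)
      ≤ ∑ x ∈ F with ¬#(descentSet x) < n / 8, #(descentSet x) :=
        card_nsmul_le_sum _ _ _ fun _ hx => not_lt.1 (mem_filter.1 hx).2
    _ ≤ ∑ x ∈ F, #(descentSet x) := sum_le_sum_of_subset (filter_subset _ _)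
    _ ≤ n.choose (n / 2) := sum_card_descentSet_le hn hF hdisj

theorem card_mul_le_of_pairwiseDisjoint_BD {n : ℕ} (hn : Even n) (h1000 : 1000 ≤ n)
    {F : Finset (List Bool)} (hF : ∀ x ∈ F, x ∈ balanced n)
    (hdisj : (F : Set (List Bool)).PairwiseDisjoint BD) :
    (#F : ℝ) * (n * √n) ≤ 17 * 2 ^ n := by
  set s := #{x ∈ F | #(descentSet x) < n / 8}
  set b := #{x ∈ F | ¬#(descentSet x) < n / 8}
  have hs : (s : ℝ) * n ^ 2 ≤ 2 ^ n := by
    exact_mod_cast card_few_descents_mul_sq_le h1000 F fun x hx => (hF x hx).1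
  have hb : (b : ℝ) * n ≤ 16 * n.choose (n / 2) := by
    have : b * n ≤ 16 * n.choose (n / 2) :=
      calc b * n ≤ b * (16 * (n / 8)) := Nat.mul_le_mul_left _ (by omega)
        _ = 16 * (b * (n / 8)) := by ring
        _ ≤ 16 * n.choose (n / 2) :=
          Nat.mul_le_mul_left _ (card_many_descents_mul_le (by omega) hF hdisj)
    exact_mod_cast this
  have hn1 : (1 : ℝ) ≤ n := by exact_mod_cast (by omega : 1 ≤ n)
  have hsqrt : √n ≤ n := (Real.sqrt_le_left (by positivity)).2 (by nlinarith)
  have hchoose := choose_half_mul_sqrt_le hn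
  have hcard : (#F : ℝ) = s + b := by exact_mod_cast (card_filter_add_card_filter_not _).symm
  rw [hcard]
  nlinarith [Real.sqrt_nonneg n, mul_le_mul_of_nonneg_left hsqrt (by positivity : (0 : ℝ) ≤ s * n),
    mul_le_mul_of_nonneg_right hb (Real.sqrt_nonneg n)]

theorem logb_mul_sqrt {x : ℝ} (hx : 0 ≤ x) : logb 2 (x * √x) = 3 / 2 * logb 2 x := by
  rcases hx.eq_or_lt with rfl | hx
  · simp
  rw [logb_mul hx.ne' (Real.sqrt_pos.2 hx).ne', logb, logb, Real.log_sqrt hx.le]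
  ring

theorem logb_le_sub_logb_of_mul_le {y c d : ℝ} (hy : 0 ≤ y) (hc : 0 < c) (hcd : c ≤ d)
    (h : y * c ≤ d) : logb 2 y ≤ logb 2 d - logb 2 c := by
  rcases hy.eq_or_lt with rfl | hy
  · simpa using (logb_le_logb one_lt_two hc (hc.trans_le hcd)).2 hcd
  rw [le_sub_iff_add_le, ← logb_mul hy.ne' hc.ne']
  exact (logb_le_logb one_lt_two (by positivity) (hc.trans_le hcd)).2 h

theorem le_redundancy_of_reconCode {n : ℕ} (hn : Even n) (h1000 : 1000 ≤ n)
    {B : List Bool → Set (List Bool)}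
    (hB : B ∈ ({BD, BI, BDI} : Set (List Bool → Set (List Bool)))) {C : Set (List Bool)}
    (hC : reconCode n 1 B C) :
    3 / 2 * logb 2 n - logb 2 17 ≤ n - logb 2 C.ncard := by
  obtain ⟨hsub, hdisj⟩ := (reconCode_one_iff hB C).1 hC
  have hfin := (balanced_finite n).subset hsub
  have hcard := card_mul_le_of_pairwiseDisjoint_BD hn h1000 (F := hfin.toFinset)
    (fun x hx => hsub (hfin.mem_toFinset.1 hx)) (by simpa using hdisj)
  rw [← Set.ncard_eq_toFinset_card C hfin] at hcard
  have hn_le : (n : ℝ) ≤ n.choose (n / 2) := by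
    exact_mod_cast (Nat.choose_one_right n).symm.le.trans (Nat.choose_le_middle 1 n)
  have hsmall : (n : ℝ) * √n ≤ 17 * 2 ^ n := by
    nlinarith [choose_half_mul_sqrt_le hn, Real.sqrt_nonneg n, pow_pos (two_pos (α := ℝ)) n]
  have := logb_le_sub_logb_of_mul_le (by positivity) (by positivity) hsmall hcard
  rw [logb_mul (by norm_num) (by positivity), logb_mul_sqrt n.cast_nonneg, logb_pow,
    logb_self_eq_one one_lt_two] at this
  linarith

theorem exists_ncard_BVT_ge (n : ℕ) :
    ∃ a, (n.choose (n / 2) : ℝ) ≤ (n + 1) * (BVT n a).ncard := by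
  obtain ⟨a, ha, hfiber⟩ := exists_le_card_fiber_of_nsmul_le_card_of_maps_to
    (s := fixedWeight n (n / 2)) (t := range (n + 1)) (f := fun x => vtSum x % (n + 1))
    (b := (n.choose (n / 2) : ℝ) / (n + 1))
    (fun x _ => mem_range.2 (Nat.mod_lt _ n.succ_pos)) ⟨0, mem_range.2 n.succ_pos⟩
    (le_of_eq (by rw [card_range, card_fixedWeight, nsmul_eq_mul]; push_cast; field_simp))
  have hBVT : BVT n a = {x ∈ fixedWeight n (n / 2) | vtSum x % (n + 1) = a} := by
    ext x
    simp [BVT, balanced_eq_fixedWeight, Nat.ModEq, Nat.mod_eq_of_lt (mem_range.1 ha)]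
  refine ⟨a, ?_⟩
  rw [hBVT, Set.ncard_coe_finset]
  rw [div_le_iff₀ (by positivity)] at hfiber
  linarith

theorem redundancy_BVT_le {n a : ℕ} (hn : Even n) (h2 : 2 ≤ n)
    (ha : (n.choose (n / 2) : ℝ) ≤ (n + 1) * (BVT n a).ncard) :
    n - logb 2 (BVT n a).ncard ≤ 3 / 2 * logb 2 n + 3 / 2 := by
  have hn1 : (2 : ℝ) ≤ n := by exact_mod_cast h2
  have h : (2 : ℝ) ^ n ≤ (BVT n a).ncard * (2 * n * √(2 * n)) :=
    calc (2 : ℝ) ^ n ≤ √(2 * n) * n.choose (n / 2) := two_pow_le_sqrt_mul_choose_half hn h2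
      _ ≤ √(2 * n) * ((n + 1) * (BVT n a).ncard) := by gcongr
      _ ≤ √(2 * n) * (2 * n * (BVT n a).ncard) := by gcongr; linarith
      _ = (BVT n a).ncard * (2 * n * √(2 * n)) := by ring
  have hpos : (0 : ℝ) < (BVT n a).ncard :=
    pos_of_mul_pos_left ((pow_pos two_pos n).trans_le h) (by positivity)
  have := (logb_le_logb one_lt_two (by positivity) (by positivity)).2 h
  rw [logb_mul hpos.ne' (by positivity), logb_mul_sqrt (by positivity), logb_pow,
    logb_self_eq_one one_lt_two, logb_mul two_ne_zero (by positivity),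
    logb_self_eq_one one_lt_two] at this
  linarith

theorem le_rho {n N : ℕ} {B : List Bool → Set (List Bool)} {L : ℝ}
    (h : ∀ C, reconCode n N B C → L ≤ n - logb 2 C.ncard) : L ≤ rho n N B :=
  le_csInf ⟨_, ∅, ⟨Set.empty_subset _, by simp⟩, rfl⟩ fun _ ⟨C, hC, hr⟩ =>
    hr ▸ h C hC

theorem rho_le {n N : ℕ} {B : List Bool → Set (List Bool)} {L : ℝ}
    (h : ∀ C, reconCode n N B C → L ≤ n - logb 2 C.ncard) {C : Set (List Bool)}
    (hC : reconCode n N B C) : rho n N B ≤ n - logb 2 C.ncard :=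
  csInf_le ⟨L, fun _ ⟨C, hC, hr⟩ => hr ▸ h C hC⟩ ⟨C, hC, rfl⟩

/-- Theorem: for `B ∈ {B^D, B^I, B^DI}`, `ρ_b(n,1;B) = (3/2)·log₂ n + Θ(1)`. -/
theorem stmt1 :
    ∀ B ∈ ({BD, BI, BDI} : Set (List Bool → Set (List Bool))),
      ∃ c1 c2 : ℝ, ∃ n0 : ℕ, Even n0 ∧ ∀ n : ℕ, Even n → n0 ≤ n →
        (3 / 2) * Real.logb 2 (n : ℝ) + c1 ≤ rho n 1 B ∧
        rho n 1 B ≤ (3 / 2) * Real.logb 2 (n : ℝ) + c2 := by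
  intro B hB
  refine ⟨-logb 2 17, 3 / 2, 1000, ⟨500, rfl⟩, fun n hn hn0 => ?_⟩
  have hlow := fun C (hC : reconCode n 1 B C) => le_redundancy_of_reconCode hn hn0 hB hC
  obtain ⟨a, ha⟩ := exists_ncard_BVT_ge n
  have hBVT : reconCode n 1 B (BVT n a) :=
    (reconCode_one_iff hB _).2 ⟨fun x hx => hx.1, BVT_pairwiseDisjoint_BD n a⟩
  exact ⟨by linarith [le_rho hlow],
    (rho_le hlow hBVT).trans (redundancy_BVT_le hn (by omega) ha)⟩

end BRC
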